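/- The submax Tucker rank, defined by r(X) = the second-largest value among rank(X_(1)),…,rank(X_(N)) (counted with multiplicity, and equal to rank(X_(1)) when N=1), is a QZC rank function. -/

import Mathlib

open scoped BigOperators

/-- An order-`N` real tensor with mode sizes `I n`. -/
abbrev Tensor (N : ℕ) (I : Fin N → ℕ) : Type :=
  ((n : Fin N) → Fin (I n)) → ℝ

/-- A rank-one tensor is an outer product of nonzero vectors. -/
def IsRankOne {N : ℕ} {I : Fin N → ℕ} (X : Tensor N I) : Prop :=
  ∃ a : (n : Fin N) → Fin (I n) → ℝ, (∀ n, a n ≠ 0) ∧ ∀ i, X i = ∏ n, a n (i n)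

/-- The order-`N` identity tensor `I_{M,N}`: ones on the diagonal, zeros elsewhere. -/
def idTensor (M N : ℕ) : Tensor N (fun _ => M) :=
  fun i => if ∀ n m : Fin N, i n = i m then 1 else 0

/-- The matrix associated to a tensor of shape `I₁ × I₂ × 1 × ⋯ × 1`. -/
def assocMatrix {N : ℕ} {I : Fin N → ℕ} (h2 : 2 ≤ N)
    (h1 : ∀ n : Fin N, 2 ≤ n.val → I n = 1) (X : Tensor N I) :
    Matrix (Fin (I ⟨0, by omega⟩)) (Fin (I ⟨1, by omega⟩)) ℝ :=
  Matrix.of fun p q =>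
    X (fun m =>
      if e0 : m = ⟨0, by omega⟩ then Fin.cast (congrArg I e0.symm) p
      else if e1 : m = ⟨1, by omega⟩ then Fin.cast (congrArg I e1.symm) q
      else Fin.cast (h1 m (by
        have v0 : m.val ≠ 0 := fun hh => e0 (Fin.ext hh)
        have v1 : m.val ≠ 1 := fun hh => e1 (Fin.ext hh)
        omega)).symm 0)

/-- Permutation of the modes of a tensor. -/
def permute {N : ℕ} (I : Fin N → ℕ) (π : Equiv.Perm (Fin N)) (X : Tensor N I) :
    Tensor N (fun m => I (π m)) :=
  fun i => X (fun m => Fin.cast (congrArg I (π.apply_symm_apply m)) (i (π.symm m)))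

/-- `Y` is a subtensor of `X` : it is obtained by selecting, in each mode, an
increasing subset of the indices. -/
def IsSubtensor {N : ℕ} {J I : Fin N → ℕ} (Y : Tensor N J) (X : Tensor N I) : Prop :=
  ∃ f : (n : Fin N) → Fin (J n) → Fin (I n),
    (∀ n, StrictMono (f n)) ∧ ∀ i, Y i = X (fun n => f n (i n))

/-- The mode-`n` unfolding of a tensor, as a matrix whose columns are the
mode-`n` fibers. -/
def modeUnfold {N : ℕ} {I : Fin N → ℕ} (X : Tensor N I) (n : Fin N) :
    Matrix (Fin (I n)) ((m : {m : Fin N // m ≠ n}) → Fin (I m.1)) ℝ :=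
  Matrix.of fun p j =>
    X (fun m => if h : m = n then Fin.cast (congrArg I h.symm) p else j ⟨m, h⟩)

/-- The mode-`n` matrix product `X ×ₙ A`. -/
def modeMul {N : ℕ} {I : Fin N → ℕ} (X : Tensor N I) (n : Fin N) {J : ℕ}
    (A : Matrix (Fin J) (Fin (I n)) ℝ) : Tensor N (Function.update I n J) :=
  fun i => ∑ t : Fin (I n),
    A (Fin.cast (by simp) (i n)) t *
      X (fun m =>
        if h : m = n then Fin.cast (congrArg I h.symm) t
        else Fin.cast (by rw [Function.update_of_ne h]) (i m))

/-- Appending a trailing mode of dimension 1 to a tensor. -/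
def snocOne {N : ℕ} {I : Fin N → ℕ} (X : Tensor N I) :
    Tensor (N + 1) (Fin.snoc I 1) :=
  fun i => X (fun m => Fin.cast (by simp) (i m.castSucc))

/-- The matrix associated to a tensor all of whose modes other than `n₁, n₂`
have dimension 1 (a "submatrix" shape). -/
def twoModeMatrix {N : ℕ} {J : Fin N → ℕ} (Z : Tensor N J) (n₁ n₂ : Fin N)
    (h1 : ∀ m, m ≠ n₁ → m ≠ n₂ → J m = 1) : Matrix (Fin (J n₁)) (Fin (J n₂)) ℝ :=
  Matrix.of fun p q =>
    Z (fun m =>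
      if h : m = n₁ then Fin.cast (congrArg J h.symm) p
      else if h' : m = n₂ then Fin.cast (congrArg J h'.symm) q
      else Fin.cast (h1 m h h').symm 0)

/-- A rank function assigns a natural number to every real tensor. -/
def RankFun : Type :=
  ∀ (N : ℕ) (I : Fin N → ℕ), Tensor N I → ℕ

/-- The axioms (QZC1)–(QZC6) of Qi, Zhang and Chen for a tensor rank function. -/
structure IsQZCRankFn (r : RankFun) : Prop where
  zero_iff : ∀ (N : ℕ), 0 < N → ∀ (I : Fin N → ℕ) (X : Tensor N I),
    r N I X = 0 ↔ X = 0
  one_iff : ∀ (N : ℕ), 0 < N → ∀ (I : Fin N → ℕ) (X : Tensor N I),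
    r N I X = 1 ↔ IsRankOne X
  id_eq : ∀ (M N : ℕ), 2 ≤ N → r N (fun _ => M) (idTensor M N) = M
  matrix_eq : ∀ (N : ℕ) (h2 : 2 ≤ N) (I : Fin N → ℕ)
    (h1 : ∀ n : Fin N, 2 ≤ n.val → I n = 1) (X : Tensor N I),
    r N I X = (assocMatrix h2 h1 X).rank
  smul_eq : ∀ (N : ℕ), 0 < N → ∀ (I : Fin N → ℕ) (α : ℝ), α ≠ 0 →
    ∀ (X : Tensor N I), r N I (α • X) = r N I X
  perm_eq : ∀ (N : ℕ), 0 < N → ∀ (I : Fin N → ℕ) (π : Equiv.Perm (Fin N))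
    (X : Tensor N I), r N (fun m => I (π m)) (permute I π X) = r N I X
  subtensor_le : ∀ (N : ℕ), 0 < N → ∀ (I J : Fin N → ℕ) (X : Tensor N I)
    (Y : Tensor N J), IsSubtensor Y X → r N J Y ≤ r N I X

/-- The max Tucker rank: the largest rank of a mode-`n` unfolding. -/
noncomputable def maxTuckerRank : RankFun := fun N _I X =>
  Finset.univ.sup fun n : Fin N => (modeUnfold X n).rank

/-- The submax Tucker rank: the second-largest (with multiplicity) rank of a
mode unfolding, and the unfolding rank itself when `N = 1`. -/
noncomputable def submaxRank : RankFun := fun N _I X =>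
  let s : Multiset ℕ := (Finset.univ : Finset (Fin N)).val.map fun n => (modeUnfold X n).rank
  if N ≤ 1 then s.sup else (s.erase s.sup).sup

/-!
Every axiom is a statement about the vector of unfolding ranks `rank X_(n)`: they all vanish
iff `X = 0`, are all `1` for a rank-one tensor and all `M` for `I_{M,N}`, are unchanged by
scaling, are permuted along with the modes and decrease when passing to a subtensor; for a
tensor of shape `I₁ × I₂ × 1 × ⋯ × 1` the first two equal the rank of the associated matrix and
the others are at most it.

The substantial point is the converse for rank one: submax rank `1` means that `X ≠ 0` and that
all unfoldings but one have rank `≤ 1`. The vanishing of their `2 × 2` minors then lets one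
trade, one mode at a time, the entries of an index `i` for those of a fixed `i₀` with
`X i₀ ≠ 0`, which yields `X i₀ ^ (N - 1) * X i = ∏ n, X (update i₀ n (i n))`, a product of
vectors.
-/

open Finset

namespace Matrix

variable {K m n : Type*} [Field K] [Fintype n]

theorem rank_eq_zero_iff (A : Matrix m n K) : A.rank = 0 ↔ A = 0 := by
  classical
  rw [rank, Submodule.finrank_eq_zero, LinearMap.range_eq_bot, ← toLin'_apply',
    LinearEquiv.map_eq_zero_iff]

theorem rank_smul_of_ne_zero (A : Matrix m n K) {c : K} (hc : c ≠ 0) : (c • A).rank = A.rank :=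
  A.rank_smul_of_mem_nonZeroDivisors (mem_nonZeroDivisors_of_ne_zero hc)

theorem rank_submatrix_of_surjective {n₀ : Type*} [Fintype n₀] (A : Matrix m n K) {c : n₀ → n}
    (hc : c.Surjective) : (A.submatrix id c).rank = A.rank := by
  refine le_antisymm (A.rank_submatrix_le _ _) ?_
  have h := (A.submatrix id c).rank_submatrix_le id (Function.surjInv hc)
  rwa [submatrix_submatrix, Function.comp_id, (Function.rightInverse_surjInv hc).comp_eq_id,
    submatrix_id_id] at h

theorem mul_eq_mul_of_rank_le_one {A : Matrix m n K} (hA : A.rank ≤ 1) (p p' : m) (q q' : n) :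
    A p q * A p' q' = A p q' * A p' q := by
  by_contra hne
  have hdet : (A.submatrix ![p, p'] ![q, q']).det ≠ 0 := by
    rw [det_fin_two]
    simpa [sub_eq_zero] using hne
  have := (rank_of_det_ne_zero hdet).symm.trans_le ((A.rank_submatrix_le _ _).trans hA)
  simp at this

end Matrix

def submax {N : ℕ} (r : Fin N → ℕ) : ℕ :=
  let s : Multiset ℕ := (univ : Finset (Fin N)).val.map r
  if N ≤ 1 then s.sup else (s.erase s.sup).sup

section Submax

variable {N : ℕ} {r r' : Fin N → ℕ} {k : ℕ}

theorem submax_of_le_one (hN : N ≤ 1) : submax r = univ.sup r := by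
  simp only [submax, if_pos hN, sup_def]

theorem submax_eq_sup_erase (hN : 2 ≤ N) {n₀ : Fin N} (hmax : ∀ n, r n ≤ r n₀) :
    submax r = (univ.erase n₀).sup r := by
  have hsup : (univ.val.map r).sup = r n₀ :=
    le_antisymm (Multiset.sup_le.2 (by simpa using hmax))
      (Multiset.le_sup (Multiset.mem_map_of_mem r (mem_univ n₀)))
  have huniv : (univ : Finset (Fin N)).val = n₀ ::ₘ (univ.erase n₀).val := by
    rw [erase_val, Multiset.cons_erase (mem_univ n₀)]
  simp only [submax, if_neg (show ¬N ≤ 1 by omega), hsup, sup_def]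
  rw [huniv, Multiset.map_cons, Multiset.erase_cons_head]

theorem exists_forall_ne_le_submax (hN : 0 < N) : ∃ n₀, ∀ n ≠ n₀, r n ≤ submax r := by
  obtain ⟨n₀, -, hmax⟩ := exists_max_image univ r ⟨⟨0, hN⟩, mem_univ _⟩
  refine ⟨n₀, fun n hn => ?_⟩
  rcases le_or_gt N 1 with hN1 | hN2
  · exact (submax_of_le_one hN1 (r := r)).symm ▸ le_sup (mem_univ n)
  · rw [submax_eq_sup_erase hN2 fun n => hmax n (mem_univ n)]
    exact le_sup (mem_erase.2 ⟨hn, mem_univ n⟩)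

theorem submax_le_of_forall_ne (hN : 2 ≤ N) {n₀ : Fin N} (h : ∀ n ≠ n₀, r n ≤ k) :
    submax r ≤ k := by
  obtain ⟨m, -, hmax⟩ := exists_max_image univ r ⟨n₀, mem_univ _⟩
  rw [submax_eq_sup_erase hN fun n => hmax n (mem_univ n)]
  refine Finset.sup_le fun n hn => ?_
  rcases eq_or_ne n n₀ with rfl | hn₀
  · exact (hmax n (mem_univ n)).trans (h m (mem_erase.1 hn).1.symm)
  · exact h n hn₀

theorem le_submax_of_ne {i j : Fin N} (hij : i ≠ j) (hi : k ≤ r i) (hj : k ≤ r j) :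
    k ≤ submax r := by
  have hN : 2 ≤ N := by
    have := Fin.val_ne_of_ne hij
    omega
  obtain ⟨m, -, hmax⟩ := exists_max_image univ r ⟨i, mem_univ _⟩
  rw [submax_eq_sup_erase hN fun n => hmax n (mem_univ n)]
  rcases eq_or_ne i m with rfl | him
  · exact hj.trans (le_sup (mem_erase.2 ⟨hij.symm, mem_univ j⟩))
  · exact hi.trans (le_sup (mem_erase.2 ⟨him, mem_univ i⟩))

theorem submax_mono (h : r ≤ r') : submax r ≤ submax r' := by
  rcases le_or_gt N 1 with hN1 | hN2
  · rw [submax_of_le_one hN1, submax_of_le_one hN1]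
    exact sup_mono_fun fun n _ => h n
  · obtain ⟨n₀, hn₀⟩ := exists_forall_ne_le_submax (r := r') (by omega)
    exact submax_le_of_forall_ne hN2 fun n hn => (h n).trans (hn₀ n hn)

theorem submax_const (hN : 0 < N) (c : ℕ) : submax (fun _ : Fin N => c) = c := by
  rcases le_or_gt N 1 with hN1 | hN2
  · rw [submax_of_le_one hN1, sup_const ⟨⟨0, hN⟩, mem_univ _⟩]
  · refine le_antisymm (submax_le_of_forall_ne hN2 (n₀ := ⟨0, hN⟩) fun _ _ => le_rfl) ?_
    exact le_submax_of_ne (i := ⟨0, hN⟩) (j := ⟨1, hN2⟩) (by simp) le_rfl le_rfl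

theorem submax_comp_equiv (π : Equiv.Perm (Fin N)) : submax (r ∘ π) = submax r := by
  simp only [submax, ← Multiset.map_map, Multiset.map_univ_val_equiv]

end Submax

section Unfolding

variable {N : ℕ} {I : Fin N → ℕ}

theorem modeUnfold_apply_update (X : Tensor N I) (n : Fin N) (p : Fin (I n))
    (j : (m : Fin N) → Fin (I m)) :
    modeUnfold X n p (fun m => j m.1) = X (Function.update j n p) := by
  show X _ = X _
  congr 1
  funext m
  by_cases h : m = n
  · subst h; simp
  · simp [h]

theorem modeUnfold_eq_zero_iff {X : Tensor N I} {n : Fin N} : modeUnfold X n = 0 ↔ X = 0 := by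
  refine ⟨fun h => funext fun i => ?_, fun h => h ▸ rfl⟩
  simpa [modeUnfold_apply_update] using congr_fun₂ h (i n) (fun m => i m.1)

theorem rank_modeUnfold_eq_zero_iff {X : Tensor N I} {n : Fin N} :
    (modeUnfold X n).rank = 0 ↔ X = 0 :=
  (Matrix.rank_eq_zero_iff _).trans modeUnfold_eq_zero_iff

theorem rank_modeUnfold_pos {X : Tensor N I} (n : Fin N) : 0 < (modeUnfold X n).rank ↔ X ≠ 0 :=
  pos_iff_ne_zero.trans (not_congr rank_modeUnfold_eq_zero_iff)

theorem rank_modeUnfold_le_of_eq_one (X : Tensor N I) {n : Fin N} (hn : I n = 1) (m : Fin N) :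
    (modeUnfold X n).rank ≤ (modeUnfold X m).rank := by
  by_cases hX : X = 0
  · simp [rank_modeUnfold_eq_zero_iff.2 hX]
  · calc (modeUnfold X n).rank ≤ 1 := by simpa [hn] using (modeUnfold X n).rank_le_card_height
      _ ≤ (modeUnfold X m).rank := (rank_modeUnfold_pos m).2 hX

theorem rank_modeUnfold_smul (X : Tensor N I) {α : ℝ} (hα : α ≠ 0) (n : Fin N) :
    (modeUnfold (α • X) n).rank = (modeUnfold X n).rank :=
  (modeUnfold X n).rank_smul_of_ne_zero hα

theorem rank_modeUnfold_le_of_isSubtensor {J : Fin N → ℕ} {X : Tensor N I} {Y : Tensor N J}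
    (h : IsSubtensor Y X) (n : Fin N) : (modeUnfold Y n).rank ≤ (modeUnfold X n).rank := by
  obtain ⟨f, -, hY⟩ := h
  have : modeUnfold Y n = (modeUnfold X n).submatrix (f n) (fun j m => f m.1 (j m)) := by
    funext p j
    show Y _ = X _
    rw [hY]
    congr 1
    funext m
    by_cases hm : m = n
    · subst hm; simp
    · simp [hm]
  exact this ▸ Matrix.rank_submatrix_le _ _ _

theorem rank_modeUnfold_permute (π : Equiv.Perm (Fin N)) (X : Tensor N I) (n : Fin N) :
    (modeUnfold (permute I π X) n).rank = (modeUnfold X (π n)).rank := by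
  apply le_antisymm
  · have : modeUnfold (permute I π X) n = (modeUnfold X (π n)).submatrix id
        (fun j m => Fin.cast (congrArg I (π.apply_symm_apply m.1))
          (j ⟨π.symm m.1, fun h => m.2 (π.symm_apply_eq.1 h)⟩)) := by
      funext p j
      show X _ = X _
      congr 1
      funext m
      by_cases hm : m = π n
      · subst hm; simp
      · have : π.symm m ≠ n := fun h => hm (π.symm_apply_eq.1 h)
        simp [hm, this]
    exact this ▸ Matrix.rank_submatrix_le _ _ _
  · have : modeUnfold X (π n) = (modeUnfold (permute I π X) n).submatrix id
        (fun k m => k ⟨π m.1, fun h => m.2 (π.injective h)⟩) := by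
      funext p k
      show X _ = X _
      congr 1
      funext m
      by_cases hm : m = π n
      · subst hm; simp
      · have : π.symm m ≠ n := fun h => hm (π.symm_apply_eq.1 h)
        simp only [hm, this, dite_false, Fin.ext_iff, Fin.val_cast]
        congr! <;> simp
    exact this ▸ Matrix.rank_submatrix_le _ _ _

end Unfolding

theorem rank_modeUnfold_idTensor {M N : ℕ} (hN : 2 ≤ N) (n : Fin N) :
    (modeUnfold (idTensor M N) n).rank = M := by
  have : Nontrivial (Fin N) := Fin.nontrivial_iff_two_le.2 hN
  obtain ⟨m₁, hm₁⟩ := exists_ne n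
  have hsub : (modeUnfold (idTensor M N) n).submatrix id (fun t _ => t) = 1 := by
    ext p t
    simp only [Matrix.submatrix_apply, Matrix.one_apply, modeUnfold, idTensor, Matrix.of_apply]
    refine if_congr ⟨fun h => ?_, ?_⟩ rfl rfl
    · simpa [hm₁] using h n m₁
    · rintro rfl a b
      split_ifs <;> rfl
  refine le_antisymm ?_ ?_
  · simpa using (modeUnfold (idTensor M N) n).rank_le_card_height
  · simpa [hsub] using (modeUnfold (idTensor M N) n).rank_submatrix_le id (fun t _ => t)

section RankOne

variable {N : ℕ} {I : Fin N → ℕ}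

theorem IsRankOne.ne_zero {X : Tensor N I} (h : IsRankOne X) : X ≠ 0 := by
  obtain ⟨a, ha, hX⟩ := h
  choose j hj using fun n => Function.ne_iff.1 (ha n)
  intro h0
  exact prod_ne_zero_iff.2 (fun n _ => hj n) ((hX j).symm.trans (congr_fun h0 j))

theorem IsRankOne.rank_modeUnfold {X : Tensor N I} (h : IsRankOne X) (n : Fin N) :
    (modeUnfold X n).rank = 1 := by
  refine le_antisymm ?_ ((rank_modeUnfold_pos n).2 h.ne_zero)
  obtain ⟨a, -, hX⟩ := h
  have : modeUnfold X n = Matrix.vecMulVec (a n) fun j => ∏ m : {m // m ≠ n}, a m (j m) := by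
    ext p j
    rw [modeUnfold, Matrix.of_apply, hX, Matrix.vecMulVec_apply,
      ← mul_prod_erase univ _ (mem_univ n), prod_subtype (univ.erase n) (p := (· ≠ n)) (by simp)]
    simp only [dite_true, Fin.cast_eq_self]
    congr 1
    exact prod_congr rfl fun m _ => by simp [m.2]
  exact this ▸ Matrix.rank_vecMulVec_le _ _

theorem apply_mul_apply_eq_of_rank_modeUnfold_le_one {X : Tensor N I} {n : Fin N}
    (h : (modeUnfold X n).rank ≤ 1) (i j : (m : Fin N) → Fin (I m)) :
    X i * X j = X (Function.update i n (j n)) * X (Function.update j n (i n)) := by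
  have := Matrix.mul_eq_mul_of_rank_le_one h (i n) (j n) (fun m => i m.1) (fun m => j m.1)
  simp only [modeUnfold_apply_update, Function.update_eq_self] at this
  rw [this, mul_comm]

theorem pow_card_mul_apply_eq_prod_mul {X : Tensor N I} {S : Finset (Fin N)}
    (hS : ∀ n ∈ S, (modeUnfold X n).rank ≤ 1) (i₀ i : (m : Fin N) → Fin (I m)) :
    X i₀ ^ S.card * X i =
      (∏ n ∈ S, X (Function.update i₀ n (i n))) * X (S.piecewise i₀ i) := by
  induction S using Finset.induction_on with
  | empty => simp
  | insert a S ha ih =>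
    have hswap := apply_mul_apply_eq_of_rank_modeUnfold_le_one (hS a (mem_insert_self a S))
      (S.piecewise i₀ i) i₀
    rw [piecewise_eq_of_notMem _ _ _ ha, ← piecewise_insert] at hswap
    rw [card_insert_of_notMem ha, prod_insert ha]
    calc X i₀ ^ (S.card + 1) * X i = X i₀ * (X i₀ ^ S.card * X i) := by ring
      _ = (∏ n ∈ S, X (Function.update i₀ n (i n))) * (X (S.piecewise i₀ i) * X i₀) := by
        rw [ih fun n hn => hS n (mem_insert_of_mem hn)]
        ring
      _ = _ := by
        rw [hswap]
        ring

theorem isRankOne_of_forall_eq_mul_prod {X : Tensor N I} (n₀ : Fin N) {c : ℝ} (hc : c ≠ 0)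
    {b : (n : Fin N) → Fin (I n) → ℝ} (hb : ∀ n, b n ≠ 0) (hX : ∀ i, X i = c * ∏ n, b n (i n)) :
    IsRankOne X := by
  refine ⟨fun n t => (if n = n₀ then c else 1) * b n t, fun n => ?_, fun i => ?_⟩
  · obtain ⟨t, ht⟩ := Function.ne_iff.1 (hb n)
    exact Function.ne_iff.2 ⟨t, mul_ne_zero (by split_ifs <;> simp [hc]) ht⟩
  · rw [hX, prod_mul_distrib, Fintype.prod_ite_eq']

theorem isRankOne_of_rank_modeUnfold_le_one {X : Tensor N I} (hX : X ≠ 0) (n₀ : Fin N)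
    (h : ∀ n ≠ n₀, (modeUnfold X n).rank ≤ 1) : IsRankOne X := by
  obtain ⟨i₀, hi₀⟩ := Function.ne_iff.1 hX
  have hc : X i₀ ^ (univ.erase n₀).card ≠ 0 := pow_ne_zero _ hi₀
  refine isRankOne_of_forall_eq_mul_prod n₀ (inv_ne_zero hc)
    (b := fun n t => X (Function.update i₀ n t))
    (fun n => Function.ne_iff.2 ⟨i₀ n, by simpa using hi₀⟩) fun i => ?_
  have := pow_card_mul_apply_eq_prod_mul (S := univ.erase n₀)
    (fun n hn => h n (mem_erase.1 hn).1) i₀ i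
  rw [piecewise_erase_univ, prod_erase_mul univ _ (mem_univ n₀)] at this
  rw [← this, inv_mul_cancel_left₀ hc]

end RankOne

section TwoModes

open scoped Matrix

variable {N : ℕ} {J : Fin N → ℕ} (Z : Tensor N J) {n₁ n₂ : Fin N}

theorem twoModeMatrix_comm (hne : n₁ ≠ n₂) (h1 : ∀ m, m ≠ n₁ → m ≠ n₂ → J m = 1) :
    twoModeMatrix Z n₂ n₁ (fun m h h' => h1 m h' h) = (twoModeMatrix Z n₁ n₂ h1)ᵀ := by
  ext q p
  simp only [twoModeMatrix, Matrix.transpose_apply, Matrix.of_apply]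
  congr 1
  funext m
  by_cases hm₁ : m = n₁
  · subst hm₁; simp [hne]
  · simp [hm₁]

theorem rank_modeUnfold_eq_rank_twoModeMatrix (hne : n₁ ≠ n₂)
    (h1 : ∀ m, m ≠ n₁ → m ≠ n₂ → J m = 1) :
    (modeUnfold Z n₁).rank = (twoModeMatrix Z n₁ n₂ h1).rank := by
  -- every column mode other than `n₂` has dimension one
  have : modeUnfold Z n₁ =
      (twoModeMatrix Z n₁ n₂ h1).submatrix id (fun j => j ⟨n₂, hne.symm⟩) := by
    ext p j
    simp only [modeUnfold, twoModeMatrix, Matrix.submatrix_apply, Matrix.of_apply, id]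
    congr 1
    funext m
    by_cases hm₁ : m = n₁
    · simp [hm₁]
    by_cases hm₂ : m = n₂
    · subst hm₂; simp [hm₁]
    · have : Subsingleton (Fin (J m)) := Fin.subsingleton_iff_le_one.2 (h1 m hm₁ hm₂).le
      simp only [hm₁, hm₂, dite_false]
      exact Subsingleton.elim _ _
  rw [this, Matrix.rank_submatrix_of_surjective]
  intro q
  exact ⟨fun m => if h : m.1 = n₂ then Fin.cast (congrArg J h.symm) q
    else Fin.cast (h1 m.1 m.2 h).symm 0, by simp⟩

end TwoModes

section SubmaxRank

variable {N : ℕ} {I : Fin N → ℕ}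

theorem submaxRank_eq_submax (X : Tensor N I) :
    submaxRank N I X = submax fun n => (modeUnfold X n).rank := rfl

theorem submaxRank_of_forall_rank_modeUnfold_eq (hN : 0 < N) {X : Tensor N I} {c : ℕ}
    (h : ∀ n, (modeUnfold X n).rank = c) : submaxRank N I X = c := by
  rw [submaxRank_eq_submax, funext h, submax_const hN]

theorem submaxRank_eq_zero_iff (hN : 0 < N) {X : Tensor N I} : submaxRank N I X = 0 ↔ X = 0 := by
  refine ⟨fun h => by_contra fun hX => ?_, fun hX => ?_⟩
  · have := (submax_const hN 1).symm.trans_le (submax_mono fun n => (rank_modeUnfold_pos n).2 hX)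
    rw [← submaxRank_eq_submax, h] at this
    omega
  · exact submaxRank_of_forall_rank_modeUnfold_eq hN fun n => rank_modeUnfold_eq_zero_iff.2 hX

theorem submaxRank_eq_one_iff (hN : 0 < N) {X : Tensor N I} :
    submaxRank N I X = 1 ↔ IsRankOne X := by
  refine ⟨fun h => ?_, fun h => ?_⟩
  · have hX : X ≠ 0 := fun hX => by simp [(submaxRank_eq_zero_iff hN).2 hX] at h
    obtain ⟨n₀, hn₀⟩ := exists_forall_ne_le_submax (r := fun n => (modeUnfold X n).rank) hN
    exact isRankOne_of_rank_modeUnfold_le_one hX n₀ fun n hn => h ▸ hn₀ n hn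
  · exact submaxRank_of_forall_rank_modeUnfold_eq hN h.rank_modeUnfold

theorem submaxRank_idTensor {M N : ℕ} (hN : 2 ≤ N) :
    submaxRank N (fun _ => M) (idTensor M N) = M :=
  submaxRank_of_forall_rank_modeUnfold_eq (by omega) (rank_modeUnfold_idTensor hN)

theorem submaxRank_eq_rank_twoModeMatrix {Z : Tensor N I} {n₁ n₂ : Fin N} (hne : n₁ ≠ n₂)
    (h1 : ∀ m, m ≠ n₁ → m ≠ n₂ → I m = 1) :
    submaxRank N I Z = (twoModeMatrix Z n₁ n₂ h1).rank := by
  have hr₁ := rank_modeUnfold_eq_rank_twoModeMatrix Z hne h1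
  have hr₂ : (modeUnfold Z n₂).rank = (twoModeMatrix Z n₁ n₂ h1).rank := by
    rw [rank_modeUnfold_eq_rank_twoModeMatrix Z hne.symm fun m h h' => h1 m h' h,
      twoModeMatrix_comm Z hne h1, Matrix.rank_transpose]
  have hle : ∀ m, (modeUnfold Z m).rank ≤ (twoModeMatrix Z n₁ n₂ h1).rank := by
    intro m
    by_cases hm₁ : m = n₁
    · exact hm₁ ▸ hr₁.le
    by_cases hm₂ : m = n₂
    · exact hm₂ ▸ hr₂.le
    · exact hr₁ ▸ rank_modeUnfold_le_of_eq_one Z (h1 m hm₁ hm₂) n₁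
  refine le_antisymm ?_ (le_submax_of_ne hne hr₁.ge hr₂.ge)
  exact (submax_mono hle).trans (submax_const (Fin.pos n₁) _).le

theorem assocMatrix_eq_twoModeMatrix (h2 : 2 ≤ N) (h1 : ∀ n : Fin N, 2 ≤ n.val → I n = 1)
    (X : Tensor N I) :
    assocMatrix h2 h1 X = twoModeMatrix X ⟨0, by omega⟩ ⟨1, by omega⟩ fun m h₀ h₁ =>
      h1 m (by
        have := Fin.val_ne_of_ne h₀
        have := Fin.val_ne_of_ne h₁
        simp only at *
        omega) :=
  rfl

theorem submaxRank_smul {α : ℝ} (hα : α ≠ 0) (X : Tensor N I) :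
    submaxRank N I (α • X) = submaxRank N I X := by
  simp only [submaxRank_eq_submax, rank_modeUnfold_smul X hα]

theorem submaxRank_permute (π : Equiv.Perm (Fin N)) (X : Tensor N I) :
    submaxRank N (fun m => I (π m)) (permute I π X) = submaxRank N I X := by
  simp only [submaxRank_eq_submax, rank_modeUnfold_permute]
  exact submax_comp_equiv (r := fun n => (modeUnfold X n).rank) π

theorem submaxRank_le_of_isSubtensor {J : Fin N → ℕ} {X : Tensor N I} {Y : Tensor N J}
    (h : IsSubtensor Y X) : submaxRank N J Y ≤ submaxRank N I X :=
  submax_mono (rank_modeUnfold_le_of_isSubtensor h)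

end SubmaxRank

/-- The submax Tucker rank is a QZC rank function. -/
theorem isQZCRankFn_submax : IsQZCRankFn submaxRank where
  zero_iff _ hN _ _ := submaxRank_eq_zero_iff hN
  one_iff _ hN _ _ := submaxRank_eq_one_iff hN
  id_eq _ _ hN := submaxRank_idTensor hN
  matrix_eq _ h2 _ h1 X := by
    rw [assocMatrix_eq_twoModeMatrix]
    exact submaxRank_eq_rank_twoModeMatrix (by simp) _
  smul_eq _ _ _ _ hα X := submaxRank_smul hα X
  perm_eq _ _ _ π X := submaxRank_permute π X
  subtensor_le _ _ _ _ _ _ h := submaxRank_le_of_isSubtensor h
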